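/- arXiv:2104.02520 — 5 statements merged into one kernel-verified Lean document; each statement's English description precedes it below -/
import Mathlib

section
/- Let $K$ be a field of characteristic not $2$, and let $a_1,\ldots,a_n \in K$ be such that for every nonempty subset $I \subseteq \{1,\ldots,n\}$ the product $\prod_{s \in I} a_s$ is not a square in $K$. If $b_1,\ldots,b_n$ are elements of an algebraic closure of $K$ with $b_s^2 = a_s$ for all $s$, then the field extension $K(b_1,\ldots,b_n)$ has degree $2^n$ over $K$. -/
/-!
Induct on `n`, adjoining `b 0` first. Since `a 0` is not a square, `K⟮b 0⟯` has degree `2`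
over `K`. The hypothesis descends to the remaining `a s` over `K⟮b 0⟯`: if `c ∈ K` equals
`(p + q b₀)² = p² + q² a₀ + 2pq b₀` with `p q ∈ K`, then `pq = 0` because `b₀ ∉ K` and
`2 ≠ 0`, so `c` or `a₀ c` is already a square in `K`. The tower law gives `2 · 2ⁿ⁻¹`.
-/

open Polynomial IntermediateField

section SquareRoot

variable {F L : Type*} [Field F] [Field L] [Algebra F L] {a : F} {b : L}

theorem IntermediateField.exists_eq_add_mul_of_sq_eq_algebraMap
    (hb : b ^ 2 = algebraMap F L a) {x : L} (hx : x ∈ F⟮b⟯) :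
    ∃ p q : F, x = algebraMap F L p + algebraMap F L q * b := by
  have hroot : aeval b (X ^ 2 - C a) = 0 := by simp [hb]
  have hmonic : (X ^ 2 - C a).Monic := monic_X_pow_sub_C a two_ne_zero
  have hint : IsIntegral F b := ⟨_, hmonic, hroot⟩
  replace hx : x ∈ Algebra.adjoin F {b} := by
    rwa [← adjoin_simple_toSubalgebra_of_isAlgebraic hint.isAlgebraic]
  rw [Algebra.adjoin_singleton_eq_range_aeval] at hx
  obtain ⟨f, rfl⟩ := hx
  have hdeg : (f %ₘ (X ^ 2 - C a)).natDegree ≤ 1 := by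
    have := natDegree_modByMonic_lt f hmonic
      (by intro h; simpa using congrArg natDegree h)
    rw [natDegree_X_pow_sub_C] at this
    omega
  change ∃ p q, aeval b f = _
  rw [← aeval_modByMonic_eq_self_of_root hroot, eq_X_add_C_of_natDegree_le_one hdeg]
  simp only [map_add, map_mul, aeval_C, aeval_X]
  exact ⟨_, _, add_comm _ _⟩

theorem IntermediateField.finrank_adjoin_of_sq_eq_algebraMap
    (hb : b ^ 2 = algebraMap F L a) (ha : ¬IsSquare a) :
    Module.finrank F F⟮b⟯ = 2 := by
  have hirr : Irreducible (X ^ 2 - C a) :=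
    X_pow_sub_C_irreducible_of_prime Nat.prime_two
      fun y hy => ha ((isSquare_iff_exists_sq a).2 ⟨y, hy.symm⟩)
  have hmonic : (X ^ 2 - C a).Monic := monic_X_pow_sub_C a two_ne_zero
  have hroot : aeval b (X ^ 2 - C a) = 0 := by simp [hb]
  rw [adjoin.finrank ⟨_, hmonic, hroot⟩,
    ← minpoly.eq_of_irreducible_of_monic hirr hroot hmonic, natDegree_X_pow_sub_C]

theorem IntermediateField.isSquare_or_isSquare_mul_of_sq_eq_algebraMap
    (h2 : (2 : F) ≠ 0) (hb : b ^ 2 = algebraMap F L a) (ha : ¬IsSquare a) {c : F} {x : L}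
    (hx : x ∈ F⟮b⟯) (hxc : x ^ 2 = algebraMap F L c) :
    IsSquare c ∨ IsSquare (a * c) := by
  obtain ⟨p, q, rfl⟩ := exists_eq_add_mul_of_sq_eq_algebraMap hb hx
  have hexpand : algebraMap F L (c - p ^ 2 - a * q ^ 2) = algebraMap F L (2 * p * q) * b := by
    simp only [map_sub, map_mul, map_pow, map_ofNat, ← hxc, ← hb]
    ring
  by_cases hpq : 2 * p * q = 0
  · rw [hpq, map_zero, zero_mul, map_eq_zero_iff _ (algebraMap F L).injective, sub_sub,
      sub_eq_zero] at hexpand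
    rcases mul_eq_zero.1 hpq with hp | rfl
    · rw [(mul_eq_zero.1 hp).resolve_left h2] at hexpand
      exact Or.inr ⟨a * q, by rw [hexpand]; ring⟩
    · exact Or.inl ⟨p, by rw [hexpand]; ring⟩
  · -- otherwise `b` would lie in `F`, making `a` a square
    refine absurd ⟨(c - p ^ 2 - a * q ^ 2) / (2 * p * q), ?_⟩ ha
    apply (algebraMap F L).injective
    rw [← hb, map_mul, map_div₀, hexpand, mul_div_cancel_left₀ _ (by simpa using hpq), sq]

end SquareRoot

/-- The `a i` are linearly independent in `Kˣ / (Kˣ)²` viewed as an `𝔽₂`-vector space. -/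
def SquareIndependent {ι K : Type*} [CommMonoid K] (a : ι → K) : Prop :=
  ∀ I : Finset ι, I.Nonempty → ¬IsSquare (∏ s ∈ I, a s)

theorem SquareIndependent.not_isSquare {ι K : Type*} [CommMonoid K] {a : ι → K}
    (ha : SquareIndependent a) (i : ι) : ¬IsSquare (a i) := by
  simpa using ha {i} (Finset.singleton_nonempty i)

theorem SquareIndependent.map_adjoin_tail {K L : Type*} [Field K] [Field L] [Algebra K L]
    {n : ℕ} (h2 : (2 : K) ≠ 0) {a : Fin (n + 1) → K}
    (ha : SquareIndependent a) {b₀ : L} (hb₀ : b₀ ^ 2 = algebraMap K L (a 0)) :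
    SquareIndependent fun s : Fin n ↦ algebraMap K K⟮b₀⟯ (a s.succ) := by
  rintro I hI ⟨x, hx⟩
  have hxL : (x : L) ^ 2 = algebraMap K L (∏ s ∈ I, a s.succ) := by
    rw [IsScalarTower.algebraMap_apply K K⟮b₀⟯ L, map_prod, hx, sq]
    rfl
  have h0 : (0 : Fin (n + 1)) ∉ I.map (Fin.succEmb n) := by simp [Fin.succ_ne_zero]
  rcases isSquare_or_isSquare_mul_of_sq_eq_algebraMap h2 hb₀ (ha.not_isSquare 0) x.2 hxL
    with hsq | hsq
  · exact ha (I.map (Fin.succEmb n)) hI.map (by simpa using hsq)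
  · exact ha (.cons 0 _ h0) (Finset.cons_nonempty h0) (by simpa using hsq)

universe u

-- One universe for `K` and `L`: the induction replaces `K` by `K⟮b 0⟯ : Type u`.
theorem finrank_adjoin_range_of_squareIndependent {K L : Type u} [Field K] [Field L]
    [Algebra K L] (h2 : (2 : K) ≠ 0) {n : ℕ} {a : Fin n → K} (ha : SquareIndependent a)
    {b : Fin n → L} (hb : ∀ s, b s ^ 2 = algebraMap K L (a s)) :
    Module.finrank K (adjoin K (Set.range b)) = 2 ^ n := by
  induction n generalizing K with
  | zero => simp [Set.range_eq_empty]
  | succ n ih =>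
    have h2' : (2 : K⟮b 0⟯) ≠ 0 := by
      rw [← map_ofNat (algebraMap K K⟮b 0⟯) 2]
      exact (_root_.map_ne_zero _).2 h2
    have htail := ih h2' (ha.map_adjoin_tail h2 (hb 0)) (b := Fin.tail b) fun s ↦ by
      rw [← IsScalarTower.algebraMap_apply]
      exact hb s.succ
    have hsplit : adjoin K (Set.range b) =
        (adjoin K⟮b 0⟯ (Set.range (Fin.tail b))).restrictScalars K := by
      rw [adjoin_adjoin_left, Fin.range_fin_succ, Set.insert_eq]
    rw [hsplit]
    change Module.finrank K (adjoin K⟮b 0⟯ (Set.range (Fin.tail b))) = _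
    rw [← Module.finrank_mul_finrank K K⟮b 0⟯,
      finrank_adjoin_of_sq_eq_algebraMap (hb 0) (ha.not_isSquare 0), htail, pow_succ']

theorem besicovich (K : Type*) [Field K] (hchar : ringChar K ≠ 2) (n : ℕ)
    (a : Fin n → K)
    (ha : ∀ I : Finset (Fin n), I.Nonempty → ¬∃ x : K, ∏ s ∈ I, a s = x ^ 2)
    (b : Fin n → AlgebraicClosure K)
    (hb : ∀ s, (b s) ^ 2 = algebraMap K (AlgebraicClosure K) (a s)) :
    Module.finrank K (IntermediateField.adjoin K (Set.range b)) = 2 ^ n :=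
  finrank_adjoin_range_of_squareIndependent (Ring.two_ne_zero hchar)
    (fun I hI ⟨x, hx⟩ ↦ ha I hI ⟨x, hx.trans (sq x).symm⟩) hb
end

section
/- If $r = a/b$ with $a, b \in \mathbb{Z}$, $a$ odd, $b \neq 0$ even, then $7r^2 + 2$ is not a sum of three squares of rational numbers. -/
private lemma zmod8_not7 : ∀ x y z : ZMod 8, x ^ 2 + y ^ 2 + z ^ 2 ≠ 7 := by decide

private lemma odd_sq_zmod8 (D : ℤ) (h : Odd D) : ((D : ZMod 8)) ^ 2 = 1 := by
  obtain ⟨k, rfl⟩ := h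
  obtain ⟨v, hv⟩ := Int.even_mul_succ_self k
  have hZ : (2 * k + 1 : ℤ) ^ 2 = 8 * v + 1 := by nlinarith [hv]
  calc (((2 * k + 1 : ℤ) : ZMod 8)) ^ 2 = (((2 * k + 1 : ℤ) ^ 2 : ℤ) : ZMod 8) := by push_cast; ring
    _ = (((8 * v + 1 : ℤ)) : ZMod 8) := by rw [hZ]
    _ = 1 := by push_cast; have : ((8 : ZMod 8)) = 0 := by decide
                rw [this]; ring

private lemma sq_zmod4 (X : ℤ) : ((X : ZMod 4)) ^ 2 = 0 ∨ ((X : ZMod 4)) ^ 2 = 1 := by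
  rcases Int.even_or_odd X with ⟨k, rfl⟩ | ⟨k, rfl⟩
  · left; push_cast
    have h4 : ((4 : ZMod 4)) = 0 := by decide
    calc ((k : ZMod 4) + k) ^ 2 = 4 * k ^ 2 := by ring
      _ = 0 := by rw [h4]; ring
  · right; push_cast
    have h4 : ((4 : ZMod 4)) = 0 := by decide
    calc ((2 : ZMod 4) * k + 1) ^ 2 = 4 * (k ^ 2 + k) + 1 := by ring
      _ = 1 := by rw [h4]; ring

private lemma odd_sq_zmod4 (X : ℤ) (h : Odd X) : ((X : ZMod 4)) ^ 2 = 1 := by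
  obtain ⟨k, rfl⟩ := h
  push_cast
  have h4 : ((4 : ZMod 4)) = 0 := by decide
  calc ((2 : ZMod 4) * k + 1) ^ 2 = 4 * (k ^ 2 + k) + 1 := by ring
    _ = 1 := by rw [h4]; ring

private lemma even_of_first (X Y Z : ℤ)
    (h : ((X : ZMod 4)) ^ 2 + ((Y : ZMod 4)) ^ 2 + ((Z : ZMod 4)) ^ 2 = 0) : Even X := by
  by_contra hx
  have hX := odd_sq_zmod4 X (Int.not_even_iff_odd.mp hx)
  have key : ∀ t u : ZMod 4, (t = 0 ∨ t = 1) → (u = 0 ∨ u = 1) → 1 + t + u ≠ 0 := by decide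
  rw [hX] at h
  exact key _ _ (sq_zmod4 Y) (sq_zmod4 Z) h

private lemma all_even (X Y Z : ℤ)
    (h : ((X : ZMod 4)) ^ 2 + ((Y : ZMod 4)) ^ 2 + ((Z : ZMod 4)) ^ 2 = 0) :
    Even X ∧ Even Y ∧ Even Z :=
  ⟨even_of_first X Y Z h, even_of_first Y X Z (by rw [← h]; ring),
    even_of_first Z X Y (by rw [← h]; ring)⟩

private lemma descent : ∀ n : ℕ, ∀ N D X Y Z : ℤ, D.natAbs ≤ n → D ≠ 0 → N % 8 = 7 →
    N * D ^ 2 ≠ X ^ 2 + Y ^ 2 + Z ^ 2 := by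
  intro n
  induction n with
  | zero =>
    intro N D X Y Z hle hD _ _
    exact hD (Int.natAbs_eq_zero.mp (Nat.le_zero.mp hle))
  | succ n ih =>
    intro N D X Y Z hle hD hN heq
    rcases Int.even_or_odd D with ⟨E, rfl⟩ | hDo
    · have hE : E ≠ 0 := by intro h; exact hD (by rw [h]; ring)
      have h4 : ((X : ZMod 4)) ^ 2 + ((Y : ZMod 4)) ^ 2 + ((Z : ZMod 4)) ^ 2 = 0 := by
        have := congrArg (fun t : ℤ => (t : ZMod 4)) heq
        push_cast at this
        rw [← this]
        have h40 : ((4 : ZMod 4)) = 0 := by decide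
        calc ((N : ZMod 4)) * ((E : ZMod 4) + E) ^ 2 = 4 * ((N : ZMod 4) * (E : ZMod 4) ^ 2) := by
              ring
          _ = 0 := by rw [h40]; ring
      obtain ⟨⟨X', rfl⟩, ⟨Y', rfl⟩, ⟨Z', rfl⟩⟩ := all_even X Y Z h4
      refine ih N E X' Y' Z' ?_ hE hN ?_
      · have h1 : (E + E).natAbs = 2 * E.natAbs := by rw [← two_mul, Int.natAbs_mul]; rfl
        have h2 : E.natAbs ≠ 0 := Int.natAbs_ne_zero.mpr hE
        omega
      · have h4' : (4 : ℤ) * (N * E ^ 2) = 4 * (X' ^ 2 + Y' ^ 2 + Z' ^ 2) := by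
          linear_combination heq
        linarith
    · have h8 := congrArg (fun t : ℤ => (t : ZMod 8)) heq
      push_cast at h8
      rw [odd_sq_zmod8 D hDo] at h8
      have hN8 : ((N : ZMod 8)) = 7 := by
        obtain ⟨k, rfl⟩ : ∃ k, N = 8 * k + 7 := ⟨N / 8, by omega⟩
        push_cast
        have : ((8 : ZMod 8)) = 0 := by decide
        rw [this]; ring
      rw [hN8, mul_one] at h8
      exact zmod8_not7 _ _ _ h8.symm

theorem not_sum_three_squares (a b : ℤ) (ha : Odd a) (hb0 : b ≠ 0) (hb : Even b)
    (r : ℚ) (hr : r = (a : ℚ) / (b : ℚ)) :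
    ¬∃ x y z : ℚ, 7 * r ^ 2 + 2 = x ^ 2 + y ^ 2 + z ^ 2 := by
  rintro ⟨x, y, z, h⟩
  have hbQ : (b : ℚ) ≠ 0 := Int.cast_ne_zero.mpr hb0
  have hDne : ((x.den : ℤ) * y.den * z.den) ≠ 0 := by
    simp [x.den_nz, y.den_nz, z.den_nz]
  have hxd : (x.den : ℚ) ≠ 0 := by exact_mod_cast x.den_nz
  have hyd : (y.den : ℚ) ≠ 0 := by exact_mod_cast y.den_nz
  have hzd : (z.den : ℚ) ≠ 0 := by exact_mod_cast z.den_nz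
  have hx : (x.num : ℚ) = x * x.den := (div_eq_iff hxd).mp (Rat.num_div_den x)
  have hy : (y.num : ℚ) = y * y.den := (div_eq_iff hyd).mp (Rat.num_div_den y)
  have hz : (z.num : ℚ) = z * z.den := (div_eq_iff hzd).mp (Rat.num_div_den z)
  have key : (((7 * a ^ 2 + 2 * b ^ 2) * ((x.den : ℤ) * y.den * z.den) ^ 2 : ℤ) : ℚ) =
      (((b * (x.num * y.den * z.den) : ℤ) : ℚ)) ^ 2 +
      (((b * ((x.den : ℤ) * y.num * z.den) : ℤ) : ℚ)) ^ 2 +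
      (((b * ((x.den : ℤ) * (y.den : ℤ) * z.num) : ℤ) : ℚ)) ^ 2 := by
    subst hr
    field_simp at h
    push_cast
    linear_combination ((x.den : ℚ) * y.den * z.den) ^ 2 * h
      - ((b : ℚ) * y.den * z.den) ^ 2 * ((x.num : ℚ) + x * x.den) * hx
      - ((b : ℚ) * x.den * z.den) ^ 2 * ((y.num : ℚ) + y * y.den) * hy
      - ((b : ℚ) * x.den * y.den) ^ 2 * ((z.num : ℚ) + z * z.den) * hz
  have keyZ : (7 * a ^ 2 + 2 * b ^ 2) * ((x.den : ℤ) * y.den * z.den) ^ 2 =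
      (b * (x.num * y.den * z.den)) ^ 2 + (b * ((x.den : ℤ) * y.num * z.den)) ^ 2 +
      (b * ((x.den : ℤ) * (y.den : ℤ) * z.num)) ^ 2 := by exact_mod_cast key
  have hN7 : (7 * a ^ 2 + 2 * b ^ 2) % 8 = 7 := by
    obtain ⟨k, rfl⟩ := ha
    obtain ⟨l, rfl⟩ := hb
    obtain ⟨v, hv⟩ := Int.even_mul_succ_self k
    have hNe : 7 * (2 * k + 1) ^ 2 + 2 * (l + l) ^ 2 = 56 * v + 8 * l ^ 2 + 7 := by
      nlinarith [hv]
    rw [hNe]; omega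
  exact descent ((x.den : ℤ) * y.den * z.den).natAbs _ _ _ _ _ le_rfl hDne hN7 keyZ
end

section
/- Let $k \geq 1$ and let $A_1, \ldots, A_k$ be nonzero rational numbers with $A_k$ not a square in $\mathbb{Q}$. Let $W$ be a rational number with $\sqrt{|A_t|}\, W \geq 1 + \sum_{s=1}^k \sqrt{|A_s|}$ for all $t$, where $\sqrt{A_s}$ denotes a fixed complex square root of $A_s$. Then there is no choice of signs $\varepsilon_1, \ldots, \varepsilon_k \in \{\pm 1\}$ and rational number $x$ such that $x + \sum_{s=1}^k \varepsilon_s \sqrt{A_s}\, W^{s-1} = 0$. -/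
/-!
Suppose `x + ∑ ε_s √A_s W^s = 0`. All the `√A_s` lie in the algebraic closure `K` of `ℚ` in `ℂ`,
which is Galois over `ℚ`; since `A_k` is not a rational square, some automorphism `σ` of `K` sends
`√A_k` to `-√A_k`, and it sends every other `√A_s` to `±√A_s`. Subtracting the conjugated relation
from the original one leaves `∑ ε_s (√A_s - σ √A_s) W^s = 0`, whose top coefficient has norm
exactly `2 |√A_k|` while the others have norm at most `2 |√A_s|`. The bound on `W` makes the top
term dominate: `W ∑_{s<k} |√A_s| W^s ≤ W^k ∑ |√A_s| < W^k |√A_k| W`.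
-/

theorem isAlgebraic_of_sq_eq_algebraMap {F L : Type*} [Field F] [Field L] [Algebra F L]
    {x : L} {a : F} (hx : x ^ 2 = algebraMap F L a) : IsAlgebraic F x :=
  (IsIntegral.of_pow two_pos (hx ▸ isIntegral_algebraMap)).isAlgebraic

theorem AlgHom.map_eq_or_eq_neg_of_sq_eq_algebraMap {F K L : Type*} [CommRing F] [CommRing K]
    [CommRing L] [IsDomain L] [Algebra F K] [Algebra F L] (σ : K →ₐ[F] L) {x : K} {a : F}
    (hx : x ^ 2 = algebraMap F K a) {y : L} (hy : y ^ 2 = algebraMap F L a) :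
    σ x = y ∨ σ x = -y := by
  rw [← sq_eq_sq_iff_eq_or_eq_neg, ← map_pow, hx, AlgHom.commutes, hy]

theorem exists_conjugate_relation_of_not_isSquare {F L ι : Type*} [Field F] [CharZero F]
    [Field L] [Algebra F L] [IsAlgClosed L] [Fintype ι] (a : ι → F) (r : ι → L)
    (hr : ∀ i, r i ^ 2 = algebraMap F L (a i)) {i₀ : ι} (hi₀ : ¬IsSquare (a i₀)) (q : F)
    (c : ι → F) (h : algebraMap F L q + ∑ i, algebraMap F L (c i) * r i = 0) :
    ∃ τ : ι → L, (∀ i, τ i = r i ∨ τ i = -r i) ∧ τ i₀ = -r i₀ ∧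
      algebraMap F L q + ∑ i, algebraMap F L (c i) * τ i = 0 := by
  let K := algebraicClosure F L
  have := algebraicClosure.isAlgClosure F L
  let ρ : ι → K := fun i ↦
    ⟨r i, mem_algebraicClosure_iff.mpr (isAlgebraic_of_sq_eq_algebraMap (hr i))⟩
  have hρr : ∀ i, (ρ i : L) = r i := fun _ ↦ rfl
  have hρ : ∀ i, ρ i ^ 2 = algebraMap F K (a i) := fun i ↦ Subtype.ext (hr i)
  obtain ⟨σ, hσ⟩ : ∃ σ : Gal(K/F), σ (ρ i₀) ≠ ρ i₀ := by
    by_contra! hfix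
    obtain ⟨b, hb⟩ := (InfiniteGalois.mem_range_algebraMap_iff_fixed (ρ i₀)).mpr hfix
    refine hi₀ ⟨b, (algebraMap F K).injective ?_⟩
    rw [map_mul, hb, ← sq, hρ]
  have hσρ : ∀ i, σ (ρ i) = ρ i ∨ σ (ρ i) = -ρ i := fun i ↦
    (σ : K →ₐ[F] K).map_eq_or_eq_neg_of_sq_eq_algebraMap (hρ i) (hρ i)
  refine ⟨fun i ↦ σ (ρ i), fun i ↦ ?_, ?_, ?_⟩
  · rcases hσρ i with hi | hi <;> simp [hi, hρr]
  · simp [(hσρ i₀).resolve_left hσ, hρr]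
  · have hK : algebraMap F K q + ∑ i, algebraMap F K (c i) * ρ i = 0 :=
      Subtype.ext (by simpa using h)
    simpa using congrArg (fun y : K ↦ (σ y : L)) hK

theorem one_lt_of_sum_lt_last_mul {k : ℕ} {B : Fin (k + 1) → ℝ} (hB : ∀ s, 0 ≤ B s) {W : ℝ}
    (hW : ∑ s, B s < B (Fin.last k) * W) : 1 < W := by
  have hlast : B (Fin.last k) ≤ ∑ s, B s :=
    Finset.single_le_sum (fun s _ ↦ hB s) (Finset.mem_univ _)
  exact lt_of_mul_lt_mul_left (by linarith) (hB (Fin.last k))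

theorem sum_castSucc_mul_pow_lt {k : ℕ} {B : Fin (k + 1) → ℝ} (hB : ∀ s, 0 ≤ B s) {W : ℝ}
    (hW : ∑ s, B s < B (Fin.last k) * W) :
    ∑ s : Fin k, B s.castSucc * W ^ (s : ℕ) < B (Fin.last k) * W ^ k := by
  have hW1 := one_lt_of_sum_lt_last_mul hB hW
  have hinit : ∑ s : Fin k, B s.castSucc ≤ ∑ s, B s := by
    rw [Fin.sum_univ_castSucc]
    linarith [hB (Fin.last k)]
  refine lt_of_mul_lt_mul_left ?_ (zero_le_one.trans hW1.le)
  calc W * ∑ s : Fin k, B s.castSucc * W ^ (s : ℕ)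
      = ∑ s : Fin k, B s.castSucc * W ^ ((s : ℕ) + 1) := by
        rw [Finset.mul_sum]
        exact Finset.sum_congr rfl fun s _ ↦ by ring
    _ ≤ ∑ s : Fin k, B s.castSucc * W ^ k := by
        gcongr with s
        · exact hB _
        · exact hW1.le
        · exact s.isLt
    _ = W ^ k * ∑ s : Fin k, B s.castSucc := by rw [Finset.mul_sum]; simp only [mul_comm]
    _ ≤ W ^ k * ∑ s, B s := by gcongr
    _ < W ^ k * (B (Fin.last k) * W) := by gcongr
    _ = W * (B (Fin.last k) * W ^ k) := by ring

theorem norm_last_mul_pow_le_of_sum_eq_zero {𝕜 : Type*} [NormedDivisionRing 𝕜] {k : ℕ}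
    {z : Fin (k + 1) → 𝕜} {w : 𝕜} (h : ∑ s, z s * w ^ (s : ℕ) = 0) :
    ‖z (Fin.last k)‖ * ‖w‖ ^ k ≤ ∑ s : Fin k, ‖z s.castSucc‖ * ‖w‖ ^ (s : ℕ) := by
  rw [Fin.sum_univ_castSucc, add_eq_zero_iff_neg_eq'] at h
  simp only [Fin.val_last, Fin.val_castSucc] at h
  calc ‖z (Fin.last k)‖ * ‖w‖ ^ k
      = ‖∑ s : Fin k, z s.castSucc * w ^ (s : ℕ)‖ := by
        rw [← norm_pow, ← norm_mul, ← h, norm_neg]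
    _ ≤ ∑ s : Fin k, ‖z s.castSucc‖ * ‖w‖ ^ (s : ℕ) := by
        refine (norm_sum_le _ _).trans_eq (Finset.sum_congr rfl fun s _ ↦ ?_)
        rw [norm_mul, norm_pow]

theorem sum_mul_pow_ne_zero_of_last_dominant {𝕜 : Type*} [NormedDivisionRing 𝕜] {k : ℕ}
    {z : Fin (k + 1) → 𝕜} {w : 𝕜} {B : Fin (k + 1) → ℝ} (hz : ∀ s, ‖z s‖ ≤ B s)
    (hlast : ‖z (Fin.last k)‖ = B (Fin.last k)) (hB : ∑ s, B s < B (Fin.last k) * ‖w‖) :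
    ∑ s, z s * w ^ (s : ℕ) ≠ 0 := by
  intro h
  have hB0 : ∀ s, 0 ≤ B s := fun s ↦ (norm_nonneg _).trans (hz s)
  refine (sum_castSucc_mul_pow_lt hB0 hB).not_ge ?_
  calc B (Fin.last k) * ‖w‖ ^ k
      = ‖z (Fin.last k)‖ * ‖w‖ ^ k := by rw [hlast]
    _ ≤ ∑ s : Fin k, ‖z s.castSucc‖ * ‖w‖ ^ (s : ℕ) := norm_last_mul_pow_le_of_sum_eq_zero h
    _ ≤ ∑ s : Fin k, B s.castSucc * ‖w‖ ^ (s : ℕ) := by gcongr with s; exact hz _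

theorem no_vanishing_sign_combination_general (k : ℕ) (A : Fin (k + 1) → ℚ)
    (hk : ¬∃ r : ℚ, A (Fin.last k) = r ^ 2)
    (sq : Fin (k + 1) → ℂ) (hsq : ∀ s, (sq s) ^ 2 = (A s : ℂ))
    (W : ℚ)
    (hW : ∀ t, Real.sqrt |(A t : ℝ)| * (W : ℝ) ≥ 1 + ∑ s, Real.sqrt |(A s : ℝ)|) :
    ¬∃ (ε : Fin (k + 1) → ℂ) (x : ℚ),
        (∀ s, ε s = 1 ∨ ε s = -1) ∧
          (x : ℂ) + ∑ s, ε s * sq s * (W : ℂ) ^ (s : ℕ) = 0 := by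
  rintro ⟨ε, x, hε, hrel⟩
  obtain ⟨e, rfl⟩ : ∃ e : Fin (k + 1) → ℚ, (fun s ↦ (e s : ℂ)) = ε :=
    ⟨fun s ↦ if ε s = 1 then 1 else -1, funext fun s ↦ by rcases hε s with h | h <;> norm_num [h]⟩
  obtain ⟨τ, hτ, hτlast, hconj⟩ := exists_conjugate_relation_of_not_isSquare A sq
    (by simpa using hsq) (by rwa [isSquare_iff_exists_sq]) x (fun s ↦ e s * W ^ (s : ℕ))
    (by simpa [mul_right_comm] using hrel)
  replace hconj : (x : ℂ) + ∑ s, (e s : ℂ) * τ s * (W : ℂ) ^ (s : ℕ) = 0 := by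
    simpa [mul_right_comm] using hconj
  have hnorm : ∀ s, ‖sq s‖ = √|(A s : ℝ)| := fun s ↦ by
    rw [← Real.sqrt_sq (norm_nonneg _), ← norm_pow, hsq, Complex.norm_ratCast]
  have hsign : ∀ s, ‖(e s : ℂ) * (sq s - τ s)‖ = ‖sq s - τ s‖ := fun s ↦ by
    rcases hε s with h | h <;> simp [h, norm_sub_rev]
  refine sum_mul_pow_ne_zero_of_last_dominant (z := fun s ↦ (e s : ℂ) * (sq s - τ s))
    (w := W) (B := fun s ↦ 2 * ‖sq s‖) (fun s ↦ ?_) ?_ ?_ ?_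
  · rw [hsign]
    rcases hτ s with h | h <;> simp [h, ← two_mul]
  · rw [hsign, hτlast, sub_neg_eq_add, ← two_mul, norm_mul, RCLike.norm_two]
  · have hWlast := hW (Fin.last k)
    simp only [← hnorm] at hWlast
    rw [← Finset.mul_sum, Complex.norm_ratCast]
    nlinarith [le_abs_self (W : ℝ), norm_nonneg (sq (Fin.last k))]
  · simp only [mul_sub, sub_mul, Finset.sum_sub_distrib]
    linear_combination hrel - hconj

theorem no_vanishing_sign_combination (k : ℕ) (A : Fin (k + 1) → ℚ)
    (hA : ∀ s, A s ≠ 0)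
    (hk : ¬∃ r : ℚ, A (Fin.last k) = r ^ 2)
    (sq : Fin (k + 1) → ℂ) (hsq : ∀ s, (sq s) ^ 2 = (A s : ℂ))
    (W : ℚ)
    (hW : ∀ t, Real.sqrt |(A t : ℝ)| * (W : ℝ) ≥ 1 + ∑ s, Real.sqrt |(A s : ℝ)|) :
    ¬∃ (ε : Fin (k + 1) → ℂ) (x : ℚ),
        (∀ s, ε s = 1 ∨ ε s = -1) ∧
          (x : ℂ) + ∑ s, ε s * sq s * (W : ℂ) ^ (s : ℕ) = 0 :=
  no_vanishing_sign_combination_general k A hk sq hsq W hW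
end

section
/- Let $A_1, \ldots, A_k \in \mathbb{Q}^*$ and let $W = \left(k + \sum_{s=1}^k A_s^2\right)\left(1 + \sum_{s=1}^k A_s^{-2}\right)$. Then all of $A_1, \ldots, A_k$ are squares of rational numbers if and only if there exists $x \in \mathbb{Q}$ such that $\prod_{\varepsilon_1, \ldots, \varepsilon_k \in \{\pm 1\}} \left(x + \sum_{s=1}^k \varepsilon_s \sqrt{A_s}\, W^{s-1}\right) = 0$, where $\sqrt{A_s}$ denotes a fixed complex square root of $A_s$ and the product is taken over all $2^k$ sign choices. -/
/-!
If `A s = r s ^ 2`, choosing the signs with `ε_s √A_s = -r_s` makes the factor at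
`x = ∑ r_s W^s` vanish. Conversely, a vanishing factor gives signed roots `b_s = ±√A_s` with
`∑ b_s W^s = -x` rational. The two factors of `W` bound `2|A_s|` and `2/|A_t|`, so
`4|A_s| ≤ W|A_t|`, which forces `‖b_s‖ ≤ (W - 1) ‖b_t‖` for all `s, t`. Hence,
as in a base-`W` expansion, the top index at which two sign patterns differ dominates and the
`2^k` signed sums `∑ ±b_s W^s` are pairwise distinct. An automorphism of the algebraic closure
of `ℚ` in `ℂ` changes the signs of the `b_s` but fixes their sum, hence fixes every `b_s`, and
Galois theory makes each `b_s` rational.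
-/

open Finset

def relationWeight {α : Type*} [Field α] {k : ℕ} (A : Fin k → α) : α :=
  (k + ∑ s, A s ^ 2) * (1 + ∑ s, (A s)⁻¹ ^ 2)

section OrderedField

variable {α : Type*} [Field α] [LinearOrder α] [IsStrictOrderedRing α]

theorem two_mul_abs_le_add_sum_sq {ι : Type*} [Fintype ι] (x : ι → α) {c : α} (hc : 1 ≤ c)
    (s : ι) : 2 * |x s| ≤ c + ∑ i, x i ^ 2 := by
  have hs : x s ^ 2 ≤ ∑ i, x i ^ 2 := single_le_sum (fun i _ => sq_nonneg (x i)) (mem_univ s)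
  nlinarith [sq_abs (x s), sq_nonneg (|x s| - 1)]

theorem four_mul_abs_le_relationWeight_mul_abs {k : ℕ} (A : Fin k → α) (hA : ∀ s, A s ≠ 0)
    (s t : Fin k) : 4 * |A s| ≤ relationWeight A * |A t| := by
  have hk : (1 : α) ≤ k := by exact_mod_cast s.pos
  have hP := two_mul_abs_le_add_sum_sq A hk s
  have hQ := two_mul_abs_le_add_sum_sq (fun i => (A i)⁻¹) le_rfl t
  have hAt : 0 < |A t| := abs_pos.2 (hA t)
  rw [abs_inv] at hQ
  have hQ' : 2 ≤ (1 + ∑ i, (A i)⁻¹ ^ 2) * |A t| :=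
    calc (2 : α) = 2 * |A t|⁻¹ * |A t| := by field_simp
      _ ≤ _ := mul_le_mul_of_nonneg_right hQ hAt.le
  rw [relationWeight]
  nlinarith [abs_nonneg (A s)]

theorem le_sub_one_mul_of_four_mul_sq_le {x y w : α} (hx : 0 ≤ x) (hy : 0 ≤ y) (hw : 4 ≤ w)
    (h : 4 * x ^ 2 ≤ w * y ^ 2) : x ≤ (w - 1) * y := by
  have hw' : w * y ^ 2 ≤ 4 * (w - 1) ^ 2 * y ^ 2 :=
    mul_le_mul_of_nonneg_right (by nlinarith) (sq_nonneg y)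
  refine (pow_le_pow_iff_left₀ hx (mul_nonneg (by linarith) hy) two_ne_zero).1 ?_
  nlinarith

end OrderedField

theorem Complex.norm_le_sub_one_mul_norm_of_sq_eq {k : ℕ} {A : Fin k → ℚ} (hA : ∀ s, A s ≠ 0)
    {b : Fin k → ℂ} (hb : ∀ s, b s ^ 2 = A s) (s t : Fin k) :
    ‖b s‖ ≤ (‖((relationWeight A : ℚ) : ℂ)‖ - 1) * ‖b t‖ := by
  have hnorm : ∀ s, ‖b s‖ ^ 2 = |(A s : ℝ)| := fun s => by
    rw [← norm_pow, hb, Complex.norm_ratCast]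
  have h4 : ∀ s t, 4 * ‖b s‖ ^ 2 ≤ relationWeight A * ‖b t‖ ^ 2 := fun s t => by
    rw [hnorm, hnorm]
    exact_mod_cast four_mul_abs_le_relationWeight_mul_abs A hA s t
  have hW4 : (4 : ℝ) ≤ relationWeight A := by
    have hpos : 0 < ‖b s‖ ^ 2 := by rw [hnorm]; exact_mod_cast abs_pos.2 (hA s)
    nlinarith [h4 s s]
  rw [Complex.norm_ratCast, abs_of_nonneg (by linarith)]
  exact le_sub_one_mul_of_four_mul_sq_le (norm_nonneg _) (norm_nonneg _) hW4 (h4 s t)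

theorem Fin.geom_sum_Iio_mul {R : Type*} [CommRing R] {k : ℕ} (t : Fin k) (x : R) :
    (∑ s ∈ Iio t, x ^ (s : ℕ)) * (x - 1) = x ^ (t : ℕ) - 1 := by
  rw [← geom_sum_mul, ← Nat.Iio_eq_range, ← Fin.map_valEmbedding_Iio, sum_map]
  rfl

theorem Fin.sum_mul_pow_ne_zero_of_dominant {𝕜 : Type*} [NormedField 𝕜] {k : ℕ}
    {d : Fin k → 𝕜} {W : 𝕜} {t : Fin k} (hd : d t ≠ 0)
    (hlow : ∀ s < t, ‖d s‖ ≤ (‖W‖ - 1) * ‖d t‖) (hhigh : ∀ s, t < s → d s = 0) :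
    ∑ s, d s * W ^ (s : ℕ) ≠ 0 := by
  classical
  have hsplit : ∑ s, d s * W ^ (s : ℕ) = ∑ s ∈ Iio t, d s * W ^ (s : ℕ) + d t * W ^ (t : ℕ) := by
    rw [← sum_subset (subset_univ (Iic t)) fun s _ hs => by
        rw [hhigh s (not_le.1 (by simpa using hs)), zero_mul],
      ← Iio_insert, sum_insert notMem_Iio_self, add_comm]
  have hsmall : ‖∑ s ∈ Iio t, d s * W ^ (s : ℕ)‖ < ‖d t * W ^ (t : ℕ)‖ :=
    calc ‖∑ s ∈ Iio t, d s * W ^ (s : ℕ)‖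
        ≤ ∑ s ∈ Iio t, ‖d t‖ * (‖W‖ ^ (s : ℕ) * (‖W‖ - 1)) := by
          refine norm_sum_le_of_le _ fun s hs => ?_
          rw [norm_mul, norm_pow, mul_comm (‖W‖ ^ _), ← mul_assoc, mul_comm ‖d t‖]
          exact mul_le_mul_of_nonneg_right (hlow s (mem_Iio.1 hs)) (by positivity)
      _ = ‖d t‖ * (‖W‖ ^ (t : ℕ) - 1) := by rw [← mul_sum, ← sum_mul, Fin.geom_sum_Iio_mul]
      _ < ‖d t‖ * ‖W‖ ^ (t : ℕ) := by
          have := norm_pos_iff.2 hd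
          nlinarith
      _ = ‖d t * W ^ (t : ℕ)‖ := by rw [norm_mul, norm_pow]
  intro h0
  rw [hsplit, add_eq_zero_iff_neg_eq] at h0
  rw [← h0, norm_neg] at hsmall
  exact lt_irrefl _ hsmall

theorem Fin.eq_of_sum_mul_pow_eq_of_forall_eq_or_eq_neg {𝕜 : Type*} [NormedField 𝕜] {k : ℕ}
    {b c : Fin k → 𝕜} {W : 𝕜} (hb : ∀ s t, ‖b s‖ ≤ (‖W‖ - 1) * ‖b t‖)
    (hc : ∀ s, c s = b s ∨ c s = -b s)
    (h : ∑ s, c s * W ^ (s : ℕ) = ∑ s, b s * W ^ (s : ℕ)) : c = b := by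
  classical
  by_contra hne
  have hT : {s | c s ≠ b s}.toFinset.Nonempty := by
    obtain ⟨s, hs⟩ := Function.ne_iff.1 hne
    exact ⟨s, by simpa using hs⟩
  set t := {s | c s ≠ b s}.toFinset.max' hT
  have ht : c t ≠ b t := Set.mem_toFinset.1 (max'_mem _ hT)
  have hflip : ∀ s, c s ≠ b s → c s - b s = -2 * b s := fun s hs => by
    rw [(hc s).resolve_left hs]; ring
  have hdist : ∀ s, ‖c s - b s‖ ≤ ‖(2 : 𝕜)‖ * ‖b s‖ := fun s => by
    by_cases hs : c s = b s
    · rw [hs, sub_self, norm_zero]; positivity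
    · rw [hflip s hs, norm_mul, norm_neg]
  refine Fin.sum_mul_pow_ne_zero_of_dominant (d := c - b) (W := W) (t := t) (sub_ne_zero.2 ht)
    (fun s _ => ?_) (fun s hs => sub_eq_zero.2 ?_) ?_
  · calc ‖c s - b s‖ ≤ ‖(2 : 𝕜)‖ * ‖b s‖ := hdist s
      _ ≤ ‖(2 : 𝕜)‖ * ((‖W‖ - 1) * ‖b t‖) := by gcongr; exact hb s t
      _ = (‖W‖ - 1) * ‖c t - b t‖ := by rw [hflip t ht, norm_mul, norm_neg]; ring
  · by_contra hs'
    exact (le_max' _ s (Set.mem_toFinset.2 hs')).not_gt hs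
  · simp only [Pi.sub_apply, sub_mul, sum_sub_distrib, h, sub_self]

theorem IntermediateField.coe_mem_range_algebraMap_iff {F L : Type*} [Field F] [Field L]
    [Algebra F L] {E : IntermediateField F L} (x : E) :
    (x : L) ∈ Set.range (algebraMap F L) ↔ x ∈ Set.range (algebraMap F E) :=
  ⟨fun ⟨r, hr⟩ => ⟨r, Subtype.ext hr⟩, fun ⟨r, hr⟩ => ⟨r, congrArg Subtype.val hr⟩⟩

theorem mem_range_algebraMap_of_sign_rigid {F L ι : Type*} [Field F] [CharZero F] [Field L]
    [IsAlgClosed L] [Algebra F L] [Fintype ι] {b : ι → L} {w : ι → F}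
    (hsq : ∀ i, b i ^ 2 ∈ Set.range (algebraMap F L))
    (hsum : ∑ i, b i * algebraMap F L (w i) ∈ Set.range (algebraMap F L))
    (hrigid : ∀ c : ι → L, (∀ i, c i = b i ∨ c i = -b i) →
      ∑ i, c i * algebraMap F L (w i) = ∑ i, b i * algebraMap F L (w i) → c = b)
    (i : ι) : b i ∈ Set.range (algebraMap F L) := by
  set E := algebraicClosure F L
  have hmem : ∀ i, b i ∈ E := fun i => by
    obtain ⟨a, ha⟩ := hsq i
    exact mem_algebraicClosure_iff.2 (IsAlgebraic.of_pow two_pos (ha ▸ isAlgebraic_algebraMap a))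
  set β : ι → E := fun i => ⟨b i, hmem i⟩
  have hfix : ∀ σ : E ≃ₐ[F] E, ∀ i, σ (β i) = β i := by
    intro σ
    have hsigns : ∀ i, (σ (β i) : L) = b i ∨ (σ (β i) : L) = -b i := fun i => by
      obtain ⟨a, ha⟩ := (IntermediateField.coe_mem_range_algebraMap_iff (β i ^ 2)).1 (hsq i)
      have hσ : σ (β i) ^ 2 = β i ^ 2 := by rw [← map_pow, ← ha, σ.commutes]
      rcases sq_eq_sq_iff_eq_or_eq_neg.1 hσ with h | h <;> simp [h, β]
    have hsum' : ∑ i, (σ (β i) : L) * algebraMap F L (w i) = ∑ i, b i * algebraMap F L (w i) := by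
      obtain ⟨y, hy⟩ := (IntermediateField.coe_mem_range_algebraMap_iff
        (∑ i, β i * algebraMap F E (w i))).1 (by simpa [β] using hsum)
      have := congrArg (fun z : E => (z : L))
        (show σ (∑ i, β i * algebraMap F E (w i)) = ∑ i, β i * algebraMap F E (w i) by
          rw [← hy, σ.commutes])
      simpa [map_sum, β] using this
    exact fun i => Subtype.ext (congrFun (hrigid _ hsigns hsum') i)
  obtain ⟨r, hr⟩ := (InfiniteGalois.mem_range_algebraMap_iff_fixed (β i)).2 (fun σ => hfix σ i)
  exact ⟨r, congrArg Subtype.val hr⟩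

theorem exists_sign_mul_eq_neg {R : Type*} [CommRing R] [NoZeroDivisors R] {z r : R}
    (h : z ^ 2 = r ^ 2) : ∃ e : Bool, (if e then 1 else -1) * z = -r := by
  rcases sq_eq_sq_iff_eq_or_eq_neg.1 h with h | h
  · exact ⟨false, by simp [h]⟩
  · exact ⟨true, by simp [h]⟩

theorem relation_combining (k : ℕ) (A : Fin k → ℚ) (hA : ∀ s, A s ≠ 0)
    (sq : Fin k → ℂ) (hsq : ∀ s, (sq s) ^ 2 = (A s : ℂ))
    (W : ℚ)
    (hW : W = ((k : ℚ) + ∑ s, (A s) ^ 2) * (1 + ∑ s, (A s)⁻¹ ^ 2)) :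
    (∀ s, ∃ r : ℚ, A s = r ^ 2) ↔
      ∃ x : ℚ, ∏ ε : Fin k → Bool,
        ((x : ℂ) + ∑ s, (if ε s then 1 else -1) * sq s * (W : ℂ) ^ (s : ℕ)) = 0 := by
  constructor
  · intro hsquare
    choose r hr using hsquare
    choose ε hε using fun s => exists_sign_mul_eq_neg (r := (r s : ℂ)) ((hsq s).trans (by simp [hr s]))
    exact ⟨∑ s, r s * W ^ (s : ℕ), prod_eq_zero (mem_univ ε) (by simp [hε])⟩
  · rintro ⟨x, hx⟩ s
    obtain ⟨ε, -, hε⟩ := prod_eq_zero_iff.1 hx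
    set b : Fin k → ℂ := fun s => (if ε s then 1 else -1) * sq s
    have hb : ∀ s, b s ^ 2 = A s := fun s => by cases ε s <;> simp [b, hsq]
    have hdom : ∀ s t, ‖b s‖ ≤ (‖(W : ℂ)‖ - 1) * ‖b t‖ :=
      hW ▸ Complex.norm_le_sub_one_mul_norm_of_sq_eq hA hb
    obtain ⟨r, hr⟩ := mem_range_algebraMap_of_sign_rigid (w := fun s : Fin k => W ^ (s : ℕ))
      (fun s => ⟨A s, (hb s).symm⟩)
      ⟨-x, by simp only [b, map_neg, map_pow, eq_ratCast]; linear_combination -hε⟩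
      (fun c hc h => Fin.eq_of_sum_mul_pow_eq_of_forall_eq_or_eq_neg hdom hc (by simpa using h)) s
    have hrs := hb s
    rw [← hr, eq_ratCast] at hrs
    exact ⟨r, by exact_mod_cast hrs.symm⟩
end

section
/- Suppose $T \subseteq \mathbb{Q}$ satisfies: $t \in T$ if and only if there exist $x_1, \ldots, x_m \in \mathbb{Q}$ such that $f(t, x_1, \ldots, x_m) = 0$ and $g_j(t, x_1, \ldots, x_m) \in \square^*$ for $j = 1, \ldots, \ell$, where $f, g_1, \ldots, g_\ell \in \mathbb{Z}[t, x_1, \ldots, x_m]$ and $\square^* = \{r^2 : r \in \mathbb{Q}^*\}$. Then there exists a polynomial $P \in \mathbb{Z}[t, x_1, \ldots, x_{m+2}]$ such that $t \in T$ if and only if $\exists x_1 \cdots \exists x_{m+2} \in \mathbb{Q}$ with $P(t, x_1, \ldots, x_{m+2}) = 0$; in other words, conditions involving $\ell$ nonzero-square constraints can be combined into a single polynomial equation at the cost of only two extra existential variables. -/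
/-!
`𝒥_k(A, X) = ∏_ε (X - ∑ j, ε j √(A j))`, the product over all sign vectors `ε`, is a polynomial
with integer coefficients in the `A j` (`Polynomial.sqrtSumPoly`). If every `A j = r j ^ 2` with
`r j > 0`, then `∑ j, r j` is its largest root and a simple one. Conversely, if `𝒥_k(A, X)` has a
simple rational root then every `A j` is a square: were `A j` not a square, the conjugation
`√(A j) ↦ -√(A j)` of `ℚ(√(A j))` would make that root a double one. So `t ∈ T` iff
`f = 0`, `𝒥_ℓ(g, y) = 0` and `z * ∏ j, g j * 𝒥_ℓ'(g, y) = 1` for some rationals `xs, y, z`, and `P`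
is the sum of the squares of these three equations.
-/

namespace Polynomial
variable {R S : Type*} [CommRing R] [CommRing S]

theorem expand_contract_add_X_mul_expand_contract_divX (q : R[X]) :
    expand R 2 (contract 2 q) + X * expand R 2 (contract 2 q.divX) = q := by
  ext n
  rcases n with _ | n
  · simp [coeff_expand, coeff_contract]
  · rw [coeff_add, coeff_X_mul, coeff_expand two_pos, coeff_expand two_pos]
    rcases Nat.even_or_odd' n with ⟨k, rfl | rfl⟩
    · simp [coeff_contract, Nat.dvd_add_right, mul_comm]
    · simp only [coeff_contract two_ne_zero, coeff_divX, mul_comm]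
      rw [if_pos ⟨k + 1, by ring⟩, if_neg (by omega), add_zero]
      congr 1
      omega

theorem eval_eq_eval_contract_add_mul_eval_contract_divX (q : R[X]) (s : R) :
    q.eval s = (contract 2 q).eval (s ^ 2) + s * (contract 2 q.divX).eval (s ^ 2) := by
  conv_lhs => rw [← expand_contract_add_X_mul_expand_contract_divX q]
  simp

theorem map_divX (φ : R →+* S) (q : R[X]) : (q.divX).map φ = (q.map φ).divX := by
  ext n
  simp [coeff_divX]

/-- For `a = s ^ 2` this is `p(X - s) * p(X + s)` (`shiftSqrtProd_sq`), written without `√a`: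
splitting `p(X + Y) = E(Y²) + Y * O(Y²)` into even and odd parts in `Y`, it is `E(a)² - a O(a)²`. -/
noncomputable def shiftSqrtProd (p : R[X]) (a : R) : R[X] :=
  let q : R[X][X] := taylor X (p.map C)
  (contract 2 q).eval (C a) ^ 2 - C a * (contract 2 q.divX).eval (C a) ^ 2

theorem eval_taylor_X_map_C (p : R[X]) (c : R[X]) :
    (taylor X (p.map C)).eval c = p.comp (c + X) := by
  rw [taylor_eval, eval_map, comp]

theorem shiftSqrtProd_sq (p : R[X]) (s : R) :
    shiftSqrtProd p (s ^ 2) = p.comp (X - C s) * p.comp (X + C s) := by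
  have h := eval_eq_eval_contract_add_mul_eval_contract_divX (taylor X (p.map C))
  have h₁ := h (C s)
  have h₂ := h (-C s)
  rw [eval_taylor_X_map_C, ← C_pow] at h₁
  rw [eval_taylor_X_map_C, neg_sq, ← C_pow] at h₂
  rw [shiftSqrtProd, add_comm X, sub_eq_neg_add X, h₁, h₂, C_pow]
  ring

theorem shiftSqrtProd_map (φ : R →+* S) (p : R[X]) (a : R) :
    (shiftSqrtProd p a).map φ = shiftSqrtProd (p.map φ) (φ a) := by
  have hp : (p.map C).map (mapRingHom φ) = (p.map φ).map C := by
    rw [map_map, map_map, mapRingHom_comp_C]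
  have he (E : R[X][X]) (c : R[X]) : (E.eval c).map φ = (E.map (mapRingHom φ)).eval (c.map φ) :=
    (eval_map_apply (mapRingHom φ) c).symm
  simp only [shiftSqrtProd, Polynomial.map_sub, Polynomial.map_mul, Polynomial.map_pow, he,
    map_contract two_ne_zero, map_divX, map_taylor, hp, map_C, coe_mapRingHom, map_X]

theorem eval_comp_sub_mul_comp_add (p : R[X]) (s x : R) :
    (p.comp (X - C s) * p.comp (X + C s)).eval x = p.eval (x - s) * p.eval (x + s) := by
  simp

theorem eval_derivative_comp_sub_mul_comp_add (p : R[X]) (s x : R) :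
    (derivative (p.comp (X - C s) * p.comp (X + C s))).eval x =
      (derivative p).eval (x - s) * p.eval (x + s) +
        p.eval (x - s) * (derivative p).eval (x + s) := by
  simp [derivative_comp]

theorem exists_eval_eq_zero_and_eval_derivative_ne_zero [NoZeroDivisors R] {p : R[X]} {s x : R}
    (hx : (p.comp (X - C s) * p.comp (X + C s)).eval x = 0)
    (hdx : (derivative (p.comp (X - C s) * p.comp (X + C s))).eval x ≠ 0) :
    ∃ y, p.eval y = 0 ∧ (derivative p).eval y ≠ 0 := by
  rw [eval_comp_sub_mul_comp_add] at hx
  rw [eval_derivative_comp_sub_mul_comp_add] at hdx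
  rcases mul_eq_zero.mp hx with h | h
  · exact ⟨x - s, h, fun h' => hdx (by simp [h, h'])⟩
  · exact ⟨x + s, h, fun h' => hdx (by simp [h, h'])⟩

noncomputable def sqrtSumPoly : (k : ℕ) → (Fin k → R) → R[X]
  | 0, _ => X
  | k + 1, A => shiftSqrtProd (sqrtSumPoly k (Fin.init A)) (A (Fin.last k))

theorem sqrtSumPoly_map (φ : R →+* S) {k : ℕ} (A : Fin k → R) :
    (sqrtSumPoly k A).map φ = sqrtSumPoly k (φ ∘ A) := by
  induction k with
  | zero => simp [sqrtSumPoly]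
  | succ k ih => rw [sqrtSumPoly, shiftSqrtProd_map, ih]; rfl

theorem sqrtSumPoly_succ_of_eq_sq {k : ℕ} (A : Fin (k + 1) → R) {s : R}
    (hs : A (Fin.last k) = s ^ 2) :
    sqrtSumPoly (k + 1) A =
      (sqrtSumPoly k (Fin.init A)).comp (X - C s) *
        (sqrtSumPoly k (Fin.init A)).comp (X + C s) := by
  rw [sqrtSumPoly, hs, shiftSqrtProd_sq]

theorem eval_sqrtSumPoly_apply {F : Type*} [FunLike F R S] [RingHomClass F R S] (φ : F) {k : ℕ}
    (A : Fin k → R) (x : R) :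
    φ ((sqrtSumPoly k A).eval x) = (sqrtSumPoly k (φ ∘ A)).eval (φ x) := by
  simpa [sqrtSumPoly_map] using (eval_map_apply (p := sqrtSumPoly k A) (φ : R →+* S) x).symm

theorem eval_derivative_sqrtSumPoly_apply {F : Type*} [FunLike F R S] [RingHomClass F R S] (φ : F)
    {k : ℕ} (A : Fin k → R) (x : R) :
    φ ((derivative (sqrtSumPoly k A)).eval x) =
      (derivative (sqrtSumPoly k (φ ∘ A))).eval (φ x) := by
  have h := congrArg (fun p => (derivative p).eval ((φ : R →+* S) x))
    (sqrtSumPoly_map (φ : R →+* S) A)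
  rw [derivative_map, eval_map_apply] at h
  exact h

theorem sqrtSumPoly_sq_root_sum_of_pos {K : Type*} [CommRing K] [LinearOrder K]
    [IsStrictOrderedRing K]
    {k : ℕ} (r : Fin k → K) (hr : ∀ j, 0 < r j) :
    (sqrtSumPoly k (r ^ 2)).eval (∑ j, r j) = 0 ∧
      0 < (derivative (sqrtSumPoly k (r ^ 2))).eval (∑ j, r j) ∧
      ∀ y, ∑ j, r j < y → 0 < (sqrtSumPoly k (r ^ 2)).eval y := by
  -- the last conjunct, `∑ j, r j` being the largest root, is what carries the induction
  induction k with
  | zero => simp [sqrtSumPoly]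
  | succ k ih =>
    obtain ⟨hroot, hderiv, hpos⟩ := ih (Fin.init r) fun j => hr _
    have hs := hr (Fin.last k)
    have hinit : Fin.init (r ^ 2) = Fin.init r ^ 2 := rfl
    rw [sqrtSumPoly_succ_of_eq_sq (r ^ 2) (s := r (Fin.last k)) rfl, hinit, Fin.sum_univ_castSucc,
      eval_derivative_comp_sub_mul_comp_add]
    simp only [eval_comp_sub_mul_comp_add, add_sub_cancel_right]
    simp only [Fin.init] at hroot hderiv hpos
    refine ⟨by rw [hroot, zero_mul], ?_, fun y hy => ?_⟩
    · rw [hroot, zero_mul, add_zero]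
      exact mul_pos hderiv (hpos _ (by linarith))
    · exact mul_pos (hpos _ (by linarith)) (hpos _ (by linarith))

theorem eval_derivative_shiftSqrtProd_eq_zero {K : Type*} [Field K] (p : K[X]) {a : K}
    (ha : ¬IsSquare a) {x : K} (hx : (shiftSqrtProd p a).eval x = 0) :
    (derivative (shiftSqrtProd p a)).eval x = 0 := by
  -- over `L = K(θ)`, `θ² = a`, the factors `p(x - θ)` and `p(x + θ)` are swapped by `θ ↦ -θ`
  have hirr : Irreducible (X ^ 2 - C a) :=
    X_pow_sub_C_irreducible_of_prime Nat.prime_two fun b hb => ha ⟨b, by rw [← hb, sq]⟩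
  have := Fact.mk hirr
  set L := AdjoinRoot (X ^ 2 - C a)
  set θ : L := AdjoinRoot.root (X ^ 2 - C a)
  have hθ : θ ^ 2 = algebraMap K L a := by
    have := AdjoinRoot.eval₂_root (X ^ 2 - C a)
    simp only [eval₂_sub, eval₂_X_pow, eval₂_C] at this
    rw [AdjoinRoot.algebraMap_eq]; exact sub_eq_zero.mp this
  let τ : L →ₐ[K] L := AdjoinRoot.liftAlgHom _ (Algebra.ofId K L) (-θ) (by simp [hθ])
  have hτθ : τ θ = -θ := AdjoinRoot.liftAlgHom_root _ _ _ _
  set pL := p.map (algebraMap K L)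
  set x' := algebraMap K L x
  have hsplit :
      (shiftSqrtProd p a).map (algebraMap K L) = pL.comp (X - C θ) * pL.comp (X + C θ) := by
    rw [shiftSqrtProd_map, ← hθ, shiftSqrtProd_sq]
  have hconj (z : L) (hz : pL.eval z = 0) : pL.eval (τ z) = 0 := by
    rw [eval_map_algebraMap, aeval_algHom_apply, ← eval_map_algebraMap, hz, map_zero]
  have hτsub : τ (x' - θ) = x' + θ := by rw [map_sub, AlgHom.commutes, hτθ, sub_neg_eq_add]
  have hτadd : τ (x' + θ) = x' - θ := by rw [map_add, AlgHom.commutes, hτθ, ← sub_eq_add_neg]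
  have hprod : pL.eval (x' - θ) * pL.eval (x' + θ) = 0 := by
    rw [← eval_comp_sub_mul_comp_add, ← hsplit, eval_map_apply, hx, map_zero]
  have hboth : pL.eval (x' - θ) = 0 ∧ pL.eval (x' + θ) = 0 := by
    rcases mul_eq_zero.mp hprod with h | h
    · exact ⟨h, hτsub ▸ hconj _ h⟩
    · exact ⟨hτadd ▸ hconj _ h, h⟩
  apply (algebraMap K L).injective
  rw [map_zero, ← eval_map_apply, ← derivative_map, hsplit, eval_derivative_comp_sub_mul_comp_add,
    hboth.1, hboth.2, mul_zero, zero_mul, add_zero]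

theorem isSquare_of_eval_sqrtSumPoly {K : Type*} [Field K] {k : ℕ} (A : Fin k → K) {x : K}
    (hx : (sqrtSumPoly k A).eval x = 0) (hdx : (derivative (sqrtSumPoly k A)).eval x ≠ 0) :
    ∀ j, IsSquare (A j) := by
  induction k generalizing x with
  | zero => exact fun j => j.elim0
  | succ k ih =>
    by_cases hsq : IsSquare (A (Fin.last k))
    · obtain ⟨s, hs⟩ := hsq
      rw [sqrtSumPoly_succ_of_eq_sq A (s := s) (by rw [hs, sq])] at hx hdx
      obtain ⟨y, hy, hdy⟩ := exists_eval_eq_zero_and_eval_derivative_ne_zero hx hdx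
      exact Fin.lastCases ⟨s, hs⟩ (ih (Fin.init A) hy hdy)
    · exact absurd (eval_derivative_shiftSqrtProd_eq_zero _ hsq hx) hdx

theorem forall_eq_sq_ne_zero_iff_exists_eval_sqrtSumPoly {K : Type*} [Field K] [LinearOrder K]
    [IsStrictOrderedRing K] {k : ℕ} (A : Fin k → K) :
    (∀ j, ∃ r, r ≠ 0 ∧ A j = r ^ 2) ↔
      ∃ y z : K, (sqrtSumPoly k A).eval y = 0 ∧
        z * (∏ j, A j) * (derivative (sqrtSumPoly k A)).eval y = 1 := by
  constructor
  · intro hA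
    choose r hr0 hr using hA
    have hA : A = |r| ^ 2 := by ext j; simp [hr]
    obtain ⟨hroot, hderiv, -⟩ := sqrtSumPoly_sq_root_sum_of_pos |r| fun j => abs_pos.mpr (hr0 j)
    subst hA
    have hne : (∏ j, (|r| ^ 2) j) * (derivative (sqrtSumPoly k (|r| ^ 2))).eval (∑ j, |r| j) ≠ 0 :=
      mul_ne_zero (Finset.prod_ne_zero_iff.mpr fun j _ => by simp [hr0]) hderiv.ne'
    exact ⟨_, _, hroot, by rw [mul_assoc, inv_mul_cancel₀ hne]⟩
  · rintro ⟨y, z, hy, hz⟩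
    have hprod : ∏ j, A j ≠ 0 := fun h => by simp [h] at hz
    have hdy : (derivative (sqrtSumPoly k A)).eval y ≠ 0 := fun h => by simp [h] at hz
    intro j
    obtain ⟨r, hr⟩ := isSquare_of_eval_sqrtSumPoly A hy hdy j
    exact ⟨r, fun h => hprod (Finset.prod_eq_zero (Finset.mem_univ j) (by simp [hr, h])),
      by rw [hr, sq]⟩

end Polynomial

theorem sq_add_sq_add_sq_eq_zero_iff {K : Type*} [CommRing K] [LinearOrder K]
    [IsStrictOrderedRing K] {a b c : K} :
    a ^ 2 + b ^ 2 + c ^ 2 = 0 ↔ a = 0 ∧ b = 0 ∧ c = 0 := by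
  rw [add_eq_zero_iff_of_nonneg (by positivity) (sq_nonneg c),
    add_eq_zero_iff_of_nonneg (sq_nonneg a) (sq_nonneg b)]
  simp only [pow_eq_zero_iff two_ne_zero, and_assoc]

theorem good_set_diophantine (T : Set ℚ) (m ℓ : ℕ)
    (f : MvPolynomial (Fin (m + 1)) ℤ)
    (g : Fin ℓ → MvPolynomial (Fin (m + 1)) ℤ)
    (hT : ∀ t : ℚ, t ∈ T ↔
        ∃ x : Fin m → ℚ,
          MvPolynomial.aeval (Fin.cons t x) f = 0 ∧
            ∀ j, ∃ r : ℚ, r ≠ 0 ∧ MvPolynomial.aeval (Fin.cons t x) (g j) = r ^ 2) :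
    ∃ P : MvPolynomial (Fin (m + 3)) ℤ,
      ∀ t : ℚ, t ∈ T ↔ ∃ x : Fin (m + 2) → ℚ, MvPolynomial.aeval (Fin.cons t x) P = 0 := by
  
  let ι : Fin (m + 1) → Fin (m + 3) := Fin.cons 0 (Fin.succ ∘ Fin.succ ∘ Fin.succ)
  let G j := MvPolynomial.rename ι (g j)
  let J := Polynomial.sqrtSumPoly ℓ G
  let Y : MvPolynomial (Fin (m + 3)) ℤ := MvPolynomial.X (Fin.succ 0)
  let Z : MvPolynomial (Fin (m + 3)) ℤ := MvPolynomial.X (Fin.succ 1)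
  refine ⟨MvPolynomial.rename ι f ^ 2 + J.eval Y ^ 2 +
    (Z * (∏ j, G j) * (Polynomial.derivative J).eval Y - 1) ^ 2, fun t => ?_⟩
  have hι (y z : ℚ) (xs : Fin m → ℚ) (i : Fin (m + 1)) :
      (Fin.cons t (Fin.cons y (Fin.cons z xs)) : Fin (m + 3) → ℚ) (ι i) =
        (Fin.cons t xs : Fin (m + 1) → ℚ) i := by
    cases i using Fin.cases <;> rfl
  simp only [Fin.exists_fin_succ_pi, Function.comp_def, map_add, map_sub, map_mul, map_pow,
    map_prod, map_one, J, G, Y, Z, Polynomial.eval_sqrtSumPoly_apply,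
    Polynomial.eval_derivative_sqrtSumPoly_apply, MvPolynomial.aeval_rename, hι,
    MvPolynomial.aeval_X, Fin.cons_succ, Fin.cons_zero]
  simp_rw [hT, Polynomial.forall_eq_sq_ne_zero_iff_exists_eval_sqrtSumPoly,
    sq_add_sq_add_sq_eq_zero_iff, sub_eq_zero]
  exact ⟨fun ⟨xs, hf, y, z, hy, hz⟩ => ⟨y, z, xs, hf, hy, hz⟩,
    fun ⟨y, z, xs, hf, hy, hz⟩ => ⟨xs, hf, y, z, hy, hz⟩⟩
end
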